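/- Let X = (x_1 ≥ … ≥ x_N) and Y = (y_1 ≥ … ≥ y_N) be 0-dimensional persistence diagrams with the same number of points. If max(Z) ≤ max(x_l, y_l)/2, then d_B(X,Y) = max(Z). -/

import Mathlib

open Classical in
/-- Penalty of each point of the two diagrams under a partial matching `f`:
a point `x i` matched to `y j` incurs `|x i - y j|`; an unmatched `x i`
(matched to the diagonal) incurs `x i / 2`; an unmatched `y j` incurs `y j / 2`
(a `y j` in the range of `f` is already accounted for, so it incurs `0`). -/
noncomputable def diagPenalty {N M : ℕ} (x : Fin N → ℝ) (y : Fin M → ℝ)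
    (f : Fin N → Option (Fin M)) : Fin N ⊕ Fin M → ℝ
  | Sum.inl i => (f i).elim (x i / 2) (fun j => |x i - y j|)
  | Sum.inr j => if ∃ i, f i = some j then 0 else y j / 2

/-- The cost of a partial matching: the maximum of `|x i - y j|` over matched
pairs, of `x i / 2` over unmatched `i`, and of `y j / 2` over unmatched `j`. -/
noncomputable def matchCost {N M : ℕ} (x : Fin N → ℝ) (y : Fin M → ℝ)
    (f : Fin N → Option (Fin M)) : ℝ :=
  ⨆ k, diagPenalty x y f k

/-- `f : Fin N → Option (Fin M)` is a partial matching when it is injective on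
matched indices, i.e. it induces a bijection between a subset of `Fin N` and a
subset of `Fin M`. -/
def IsPartialMatching {N M : ℕ} (f : Fin N → Option (Fin M)) : Prop :=
  ∀ i i' j, f i = some j → f i' = some j → i = i'

/-- The bottleneck distance between two 0-dimensional persistence diagrams,
given by their (decreasing) sequences of death times: the minimum cost over
all partial matchings. -/
noncomputable def bottleneck {N M : ℕ} (x : Fin N → ℝ) (y : Fin M → ℝ) : ℝ :=
  ⨅ f : {f : Fin N → Option (Fin M) // IsPartialMatching f}, matchCost x y f.1

/-!
Matching `x i` with `y i` costs `max Z`. Conversely, say `x l ≥ y l` and put `m = x l - y l`,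
so `m ≤ x l / 2`. In a matching of cost `< m` none of `x 0, …, x l` may go to the diagonal, and
each must be matched to some `y j` with `y j > x l - m = y l`, hence `j < l`: that is `l + 1`
points injected into `l` indices. The case `y l ≥ x l` is symmetric.
-/

theorem exists_le_forall_rel_imp_le {α : Type*} [LinearOrder α] [LocallyFiniteOrderBot α]
    (R : α → α → Prop) (hR : ∀ a a' b, R a b → R a' b → a = a') (l : α) :
    ∃ a ≤ l, ∀ b, R a b → l ≤ b := by
  by_contra! hcon
  have hcon' : ∀ a, ∃ b, a ≤ l → R a b ∧ b < l := fun a =>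
    if ha : a ≤ l then (hcon a ha).imp fun _ hb _ => hb else ⟨a, fun h => absurd h ha⟩
  choose g hg using hcon'
  obtain ⟨a, ha, a', ha', hne, heq⟩ :=
    Finset.exists_ne_map_eq_of_card_lt_of_maps_to (s := Finset.Iic l) (t := Finset.Iio l)
      (by rw [Finset.Iic_eq_cons_Iio, Finset.card_cons]; exact Nat.lt_succ_self _)
      fun a ha => Finset.mem_Iio.mpr (hg a (Finset.mem_Iic.mp ha)).2
  rw [Finset.mem_Iic] at ha ha'
  exact hne (hR a a' (g a) (hg a ha).1 (heq ▸ (hg a' ha').1))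

section Bottleneck

variable {N M : ℕ} {x : Fin N → ℝ} {y : Fin M → ℝ} {f : Fin N → Option (Fin M)}

theorem diagPenalty_inl_of_eq_none {i : Fin N} (hi : f i = none) :
    diagPenalty x y f (.inl i) = x i / 2 := by
  simp [diagPenalty, hi]

theorem diagPenalty_inl_of_eq_some {i : Fin N} {j : Fin M} (hi : f i = some j) :
    diagPenalty x y f (.inl i) = |x i - y j| := by
  simp [diagPenalty, hi]

theorem diagPenalty_inr_of_forall_ne {j : Fin M} (hj : ∀ i, f i ≠ some j) :
    diagPenalty x y f (.inr j) = y j / 2 := by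
  simp [diagPenalty, hj]

theorem diagPenalty_inr_of_eq_some {i : Fin N} {j : Fin M} (hi : f i = some j) :
    diagPenalty x y f (.inr j) = 0 := by
  simp only [diagPenalty, if_pos (⟨i, hi⟩ : ∃ i, f i = some j)]

theorem diagPenalty_le_matchCost (k : Fin N ⊕ Fin M) : diagPenalty x y f k ≤ matchCost x y f :=
  le_ciSup (Finite.bddAbove_range _) k

theorem bottleneck_le_matchCost (hf : IsPartialMatching f) : bottleneck x y ≤ matchCost x y f :=
  ciInf_le (Set.finite_range _).bddBelow (⟨f, hf⟩ : {f // IsPartialMatching f})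

theorem le_bottleneck {a : ℝ} (h : ∀ f, IsPartialMatching f → a ≤ matchCost x y f) :
    a ≤ bottleneck x y :=
  have : Nonempty {f : Fin N → Option (Fin M) // IsPartialMatching f} :=
    ⟨⟨fun _ => none, fun _ _ _ h => by simp at h⟩⟩
  le_ciInf fun f => h f.1 f.2

end Bottleneck

theorem isPartialMatching_some {N : ℕ} : IsPartialMatching (some : Fin N → Option (Fin N)) :=
  fun _ _ _ h h' => (Option.some.inj h).trans (Option.some.inj h').symm

theorem matchCost_some_le {N : ℕ} (x y : Fin N → ℝ) :
    matchCost x y some ≤ ⨆ i, |x i - y i| := by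
  have hbdd : BddAbove (Set.range fun i => |x i - y i|) := Finite.bddAbove_range _
  have hnonneg : 0 ≤ ⨆ i, |x i - y i| := Real.iSup_nonneg fun _ => abs_nonneg _
  refine Real.iSup_le ?_ hnonneg
  rintro (i | j)
  · rw [diagPenalty_inl_of_eq_some rfl]
    exact le_ciSup hbdd i
  · rw [diagPenalty_inr_of_eq_some (i := j) rfl]
    exact hnonneg

theorem le_matchCost_of_abs_sub_le_max_div_two {N : ℕ} {x y : Fin N → ℝ}
    (hx : Antitone x) (hy : Antitone y) {l : Fin N}
    (hl : |x l - y l| ≤ max (x l) (y l) / 2) {f : Fin N → Option (Fin N)}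
    (hf : IsPartialMatching f) :
    |x l - y l| ≤ matchCost x y f := by
  rcases le_total (y l) (x l) with hyx | hxy
  · rw [abs_of_nonneg (sub_nonneg.mpr hyx)] at hl ⊢
    rw [max_eq_left hyx] at hl
    obtain ⟨i, hil, hi⟩ := exists_le_forall_rel_imp_le (fun i j => f i = some j) hf l
    have hxi : x l ≤ x i := hx hil
    refine le_trans ?_ (diagPenalty_le_matchCost (.inl i))
    cases hfi : f i with
    | none =>
      rw [diagPenalty_inl_of_eq_none hfi]
      linarith
    | some j =>
      have hyj : y j ≤ y l := hy (hi j hfi)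
      rw [diagPenalty_inl_of_eq_some hfi]
      linarith [le_abs_self (x i - y j)]
  · rw [abs_sub_comm, abs_of_nonneg (sub_nonneg.mpr hxy)] at hl ⊢
    rw [max_eq_right hxy] at hl
    obtain ⟨j, hjl, hj⟩ := exists_le_forall_rel_imp_le (fun j i => f i = some j)
      (fun _ _ _ h h' => Option.some.inj (h.symm.trans h')) l
    have hyj : y l ≤ y j := hy hjl
    by_cases hmatched : ∃ i, f i = some j
    · obtain ⟨i, hfi⟩ := hmatched
      have hxi : x i ≤ x l := hx (hj i hfi)
      refine le_trans ?_ (diagPenalty_le_matchCost (.inl i))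
      rw [diagPenalty_inl_of_eq_some hfi]
      linarith [neg_abs_le (x i - y j)]
    · push Not at hmatched
      refine le_trans ?_ (diagPenalty_le_matchCost (.inr j))
      rw [diagPenalty_inr_of_forall_ne hmatched]
      linarith

theorem lumawig_lemma2_case1_general {N : ℕ}
    (x y : Fin N → ℝ)
    (hx : Antitone x) (hy : Antitone y)
    (l : Fin N)
    (hl : |x l - y l| = ⨆ i, |x i - y i|)
    (h : (⨆ i, |x i - y i|) ≤ max (x l) (y l) / 2) :
    bottleneck x y = ⨆ i, |x i - y i| := by
  refine le_antisymm ((bottleneck_le_matchCost isPartialMatching_some).trans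
    (matchCost_some_le x y)) ?_
  rw [← hl]
  exact le_bottleneck fun _ hf => le_matchCost_of_abs_sub_le_max_div_two hx hy (hl ▸ h) hf

/-- (Lemma 2, case 1.) For diagrams with the same number of
points, if `max Z ≤ max (x l) (y l) / 2` (where `l` is the least index
achieving `max Z`), then `d_B(X,Y) = max Z`. -/
theorem lumawig_lemma2_case1 {N : ℕ} (hN : 1 ≤ N)
    (x y : Fin N → ℝ)
    (hx : Antitone x) (hy : Antitone y)
    (hxpos : ∀ i, 0 < x i) (hypos : ∀ i, 0 < y i)
    (l : Fin N)
    (hl : |x l - y l| = ⨆ i, |x i - y i|)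
    (hlleast : ∀ i, |x i - y i| = (⨆ j, |x j - y j|) → l ≤ i)
    (h : (⨆ i, |x i - y i|) ≤ max (x l) (y l) / 2) :
    bottleneck x y = ⨆ i, |x i - y i| :=
  lumawig_lemma2_case1_general x y hx hy l hl h
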